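/- (Folding Lemma with b = 1) Let a_1, …, a_n be positive integers with n ≥ 2 and a_n ≥ 2, and let t/q = [a_1, …, a_n] = 1/(a_1 + 1/(a_2 + ⋯ + 1/a_n)) be the value of this continued fraction written in lowest terms. Then t/q + (−1)^n/q^2 equals the value of the continued fraction [a_1, …, a_{n−1}, a_n + 1, a_n − 1, a_{n−1}, …, a_1]. -/

import Mathlib

/-!
With `S a = !![0, 1; 1, a]` and `K = S a₁ ⋯ S aₙ`, the value `[a₁, …, aₙ]` is `K 0 1 / K 1 1`
(`S a` encodes the Möbius map `x ↦ 1 / (a + x)`), and this fraction is reduced because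
`det K = (-1)ⁿ`. Each `S a` is symmetric, so reversing a list transposes its matrix, and the folded
continued fraction has matrix `P S(aₙ + 1) S(aₙ - 1) Pᵀ` with `P` the matrix of `[a₁, …, aₙ₋₁]`.
A direct `2 × 2` computation shows that its last column is `(t q - det P, q²)`, where `(t, q)` is
the last column of `P S(aₙ)` and `det P = (-1)ⁿ⁻¹`.
-/

/-- The value of the finite simple continued fraction `1/(a₁ + 1/(a₂ + ⋯ + 1/aₙ))`. -/
def cfVal : List ℕ → ℚ
  | [] => 0
  | a :: l => 1 / (a + cfVal l)

open Matrix

def cfStep {R : Type*} [Zero R] [One R] (a : R) : Matrix (Fin 2) (Fin 2) R := !![0, 1; 1, a]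

lemma cfStep_transpose {R : Type*} [Zero R] [One R] (a : R) : (cfStep a)ᵀ = cfStep a := by
  ext i j
  fin_cases i <;> fin_cases j <;> rfl

lemma cfStep_nonneg (a : ℕ) (i j : Fin 2) : 0 ≤ cfStep (a : ℤ) i j := by
  fin_cases i <;> fin_cases j <;> simp [cfStep]

section Folding

variable {R : Type*} [CommRing R] (K : Matrix (Fin 2) (Fin 2) R) (a : R)

lemma folding_apply_one_one :
    (K * cfStep (a + 1) * cfStep (a - 1) * Kᵀ) 1 1 = (K * cfStep a) 1 1 ^ 2 := by
  simp only [cfStep, Fin.isValue, mul_apply, of_apply, cons_val', cons_val_fin_one,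
    Fin.sum_univ_two, cons_val_zero, cons_val_one, mul_zero, mul_one, zero_add, transpose_apply]
  ring

lemma folding_apply_zero_one :
    (K * cfStep (a + 1) * cfStep (a - 1) * Kᵀ) 0 1 =
      (K * cfStep a) 0 1 * (K * cfStep a) 1 1 - K.det := by
  simp only [cfStep, Fin.isValue, mul_apply, of_apply, cons_val', cons_val_fin_one,
    Fin.sum_univ_two, cons_val_zero, cons_val_one, mul_zero, mul_one, zero_add, transpose_apply,
    det_fin_two]
  ring

end Folding

lemma isCoprime_apply_zero_one_apply_one_one_of_isUnit_det {R : Type*} [CommRing R]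
    {K : Matrix (Fin 2) (Fin 2) R} (h : IsUnit K.det) : IsCoprime (K 0 1) (K 1 1) := by
  obtain ⟨u, hu⟩ := h.exists_left_inv
  refine ⟨-u * K 1 0, u * K 0 0, ?_⟩
  rw [det_fin_two] at hu
  linear_combination hu

def cfMatrix (L : List ℕ) : Matrix (Fin 2) (Fin 2) ℤ := (L.map fun a => cfStep (a : ℤ)).prod

@[simp]
lemma cfMatrix_nil : cfMatrix [] = 1 := rfl

lemma cfMatrix_cons (a : ℕ) (L : List ℕ) : cfMatrix (a :: L) = cfStep (a : ℤ) * cfMatrix L := by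
  simp [cfMatrix]

lemma cfMatrix_append (L T : List ℕ) : cfMatrix (L ++ T) = cfMatrix L * cfMatrix T := by
  simp [cfMatrix]

lemma cfMatrix_reverse (L : List ℕ) : cfMatrix L.reverse = (cfMatrix L)ᵀ := by
  induction L with
  | nil => simp
  | cons a L ih =>
    rw [List.reverse_cons, cfMatrix_append, ih, cfMatrix_cons, cfMatrix_cons, cfMatrix_nil,
      mul_one, transpose_mul, cfStep_transpose]

lemma det_cfMatrix (L : List ℕ) : (cfMatrix L).det = (-1) ^ L.length := by
  induction L with
  | nil => simp
  | cons a L ih =>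
    rw [cfMatrix_cons, det_mul, ih, List.length_cons, pow_succ']
    simp [cfStep]

lemma cfMatrix_cons_apply_zero_one (a : ℕ) (L : List ℕ) :
    cfMatrix (a :: L) 0 1 = cfMatrix L 1 1 := by
  simp [cfMatrix_cons, cfStep, mul_apply, Fin.sum_univ_two]

lemma cfMatrix_cons_apply_one_one (a : ℕ) (L : List ℕ) :
    cfMatrix (a :: L) 1 1 = cfMatrix L 0 1 + a * cfMatrix L 1 1 := by
  simp [cfMatrix_cons, cfStep, mul_apply, Fin.sum_univ_two]

lemma cfMatrix_nonneg (L : List ℕ) (i j : Fin 2) : 0 ≤ cfMatrix L i j := by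
  induction L generalizing i j with
  | nil => rw [cfMatrix_nil, one_apply]; split_ifs <;> simp
  | cons a L ih =>
    rw [cfMatrix_cons, mul_apply]
    exact Finset.sum_nonneg fun k _ => mul_nonneg (cfStep_nonneg a i k) (ih k j)

lemma cfMatrix_apply_one_one_pos {L : List ℕ} (hL : ∀ x ∈ L, 0 < x) : 0 < cfMatrix L 1 1 := by
  induction L with
  | nil => simp
  | cons a L ih =>
    have ha : (0 : ℤ) < a := by exact_mod_cast hL a List.mem_cons_self
    rw [cfMatrix_cons_apply_one_one]
    have := cfMatrix_nonneg L 0 1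
    have := ih fun x hx => hL x (List.mem_cons_of_mem a hx)
    positivity

lemma cfVal_eq_div {L : List ℕ} (hL : ∀ x ∈ L, 0 < x) :
    cfVal L = cfMatrix L 0 1 / cfMatrix L 1 1 := by
  induction L with
  | nil => simp [cfVal]
  | cons a L ih =>
    have hL' : ∀ x ∈ L, 0 < x := fun x hx => hL x (List.mem_cons_of_mem a hx)
    have h11 : (0 : ℚ) < cfMatrix L 1 1 := by exact_mod_cast cfMatrix_apply_one_one_pos hL'
    rw [cfVal, ih hL', cfMatrix_cons_apply_zero_one, cfMatrix_cons_apply_one_one]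
    field_simp
    push_cast
    ring

lemma cfVal_den {L : List ℕ} (hL : ∀ x ∈ L, 0 < x) : ((cfVal L).den : ℤ) = cfMatrix L 1 1 := by
  have hdet : IsUnit (cfMatrix L).det := det_cfMatrix L ▸ isUnit_neg_one.pow _
  rw [cfVal_eq_div hL]
  exact Rat.den_div_eq_of_coprime (cfMatrix_apply_one_one_pos hL)
    (Int.isCoprime_iff_gcd_eq_one.mp (isCoprime_apply_zero_one_apply_one_one_of_isUnit_det hdet))

theorem folding_lemma_b_eq_one_general (M : List ℕ) (a : ℕ) (hM : ∀ x ∈ M, 0 < x)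
    (ha : 2 ≤ a) :
    cfVal (M ++ [a]) + (-1) ^ (M.length + 1) / ((cfVal (M ++ [a])).den : ℚ) ^ 2 =
      cfVal (M ++ [a + 1, a - 1] ++ M.reverse) := by
  have hpos : ∀ x ∈ M ++ [a], 0 < x := by
    simp only [List.mem_append, List.mem_singleton]
    rintro x (hx | rfl) <;> [exact hM x hx; omega]
  have hpos_fold : ∀ x ∈ M ++ [a + 1, a - 1] ++ M.reverse, 0 < x := by
    simp only [List.mem_append, List.mem_cons, List.mem_reverse, List.not_mem_nil, or_false]
    rintro x ((hx | rfl | rfl) | hx) <;> first | exact hM x hx | omega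
  have hN : cfMatrix (M ++ [a]) = cfMatrix M * cfStep (a : ℤ) := by
    simp [cfMatrix_append, cfMatrix_cons]
  have hF : cfMatrix (M ++ [a + 1, a - 1] ++ M.reverse) =
      cfMatrix M * cfStep ((a : ℤ) + 1) * cfStep ((a : ℤ) - 1) * (cfMatrix M)ᵀ := by
    simp [cfMatrix_append, cfMatrix_reverse, cfMatrix_cons, Nat.cast_sub (by omega : 1 ≤ a),
      mul_assoc]
  have hden : ((cfVal (M ++ [a])).den : ℚ) = cfMatrix (M ++ [a]) 1 1 := by
    exact_mod_cast cfVal_den hpos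
  have hq : (0 : ℚ) < cfMatrix (M ++ [a]) 1 1 := by exact_mod_cast cfMatrix_apply_one_one_pos hpos
  rw [hden, cfVal_eq_div hpos, cfVal_eq_div hpos_fold, hF, folding_apply_one_one,
    folding_apply_zero_one, ← hN, det_cfMatrix]
  field_simp
  push_cast
  ring

/-- **Folding Lemma with `b = 1`.** If `t/q = [a₁, …, aₙ]` in lowest terms (here
the list is `M ++ [a]` with `a = aₙ ≥ 2`, `n = M.length + 1 ≥ 2`, and `q` is the
denominator of `cfVal (M ++ [a])`), then
`t/q + (-1)^n/q² = [a₁, …, aₙ₋₁, aₙ + 1, aₙ - 1, aₙ₋₁, …, a₁]`. -/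
theorem folding_lemma_b_eq_one (M : List ℕ) (a : ℕ) (hM : ∀ x ∈ M, 0 < x)
    (hMne : M ≠ []) (ha : 2 ≤ a) :
    cfVal (M ++ [a]) + (-1) ^ (M.length + 1) / ((cfVal (M ++ [a])).den : ℚ) ^ 2 =
      cfVal (M ++ [a + 1, a - 1] ++ M.reverse) :=
  folding_lemma_b_eq_one_general M a hM ha
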